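/- arXiv:1309.0334 — 2 statements merged into one kernel-verified Lean document; each statement's English description precedes it below -/
import Mathlib

section
/- Let N and n be natural numbers with 2 ≤ n ≤ N, and let y : Fin N → ℝ be a finite population. Define the population mean Ȳ = (1/N)·Σ_{i} y(i) and the population variance S² = (1/(N−1))·Σ_{i} (y(i) − Ȳ)². For a subset s of Fin N of cardinality n, define the sample mean ȳ_s = (1/n)·Σ_{i∈s} y(i) and the sample variance s_y² = (1/(n−1))·Σ_{i∈s} (y(i) − ȳ_s)². Then the average of s_y² over all subsets of Fin N of cardinality n equals S²; that is, the sample variance is an unbiased estimator of the population variance under simple random sampling without replacement. -/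
/-!
Both variances are averages of squared pairwise differences:
`∑ i ∈ s, (y i - ȳ_s)² = (∑ i ∈ s, ∑ j ∈ s, (y i - y j)²) / (2 #s)`.
Summing the pairwise form of `s_y²` over all `n`-subsets, each ordered pair `i ≠ j` is counted
once for every `n`-subset containing it, i.e. `(N-2).choose (n-2)` times, and
`n (n-1) · N.choose n = N (N-1) · (N-2).choose (n-2)` turns the average into `S²`.
-/

open Finset

theorem Finset.sum_sq_sub_average {α K : Type*} [Field K] [CharZero K] (s : Finset α)
    (y : α → K) :
    ∑ i ∈ s, (y i - (∑ j ∈ s, y j) / #s) ^ 2 =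
      (∑ i ∈ s, ∑ j ∈ s, (y i - y j) ^ 2) / (2 * #s) := by
  rcases s.eq_empty_or_nonempty with rfl | hs
  · simp
  have hcard : (#s : K) ≠ 0 := Nat.cast_ne_zero.mpr hs.card_ne_zero
  simp only [sub_sq, sum_add_distrib, sum_sub_distrib, sum_const, nsmul_eq_mul,
    ← mul_sum, ← sum_mul]
  field_simp
  ring

theorem Finset.sum_powersetCard_sum_sum {α R : Type*} [DecidableEq α] [CommSemiring R]
    (u : Finset α) {k : ℕ} (hk : 2 ≤ k) (g : α → α → R) (hg : ∀ i, g i i = 0) :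
    ∑ s ∈ u.powersetCard k, ∑ i ∈ s, ∑ j ∈ s, g i j =
      (#u - 2).choose (k - 2) * ∑ i ∈ u, ∑ j ∈ u, g i j := by
  have hcount : ∀ p ∈ u ×ˢ u, p.1 ≠ p.2 →
      #{s ∈ u.powersetCard k | {p.1, p.2} ⊆ s} = (#u - 2).choose (k - 2) := by
    rintro ⟨i, j⟩ hp hij
    rw [mem_product] at hp
    have hpair : #({i, j} : Finset α) = 2 := card_pair hij
    rw [card_filter_powersetCard_subset _ _ _ (insert_subset_iff.mpr ⟨hp.1, by simpa using hp.2⟩)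
      (hpair ▸ hk), hpair]
  calc ∑ s ∈ u.powersetCard k, ∑ i ∈ s, ∑ j ∈ s, g i j
      = ∑ s ∈ u.powersetCard k, ∑ p ∈ s ×ˢ s, g p.1 p.2 := by simp only [sum_product]
    _ = ∑ p ∈ u ×ˢ u, ∑ s ∈ u.powersetCard k with {p.1, p.2} ⊆ s, g p.1 p.2 := by
        refine sum_comm' fun s p => ?_
        simp only [mem_product, mem_filter, mem_powersetCard, insert_subset_iff,
          singleton_subset_iff]
        constructor
        · rintro ⟨hs, h1, h2⟩
          exact ⟨⟨hs, h1, h2⟩, hs.1 h1, hs.1 h2⟩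
        · rintro ⟨⟨hs, h1, h2⟩, -⟩
          exact ⟨hs, h1, h2⟩
    _ = ∑ p ∈ u ×ˢ u, ((#u - 2).choose (k - 2) : R) * g p.1 p.2 := by
        refine sum_congr rfl fun p hp => ?_
        rw [sum_const, nsmul_eq_mul]
        by_cases hij : p.1 = p.2
        · rw [hij, hg, mul_zero, mul_zero]
        · rw [hcount p hp hij]
    _ = (#u - 2).choose (k - 2) * ∑ i ∈ u, ∑ j ∈ u, g i j := by rw [← mul_sum, sum_product]

theorem Nat.choose_mul_descFactorial_two (N n : ℕ) (hn : 2 ≤ n) :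
    N.choose n * n.descFactorial 2 = N.descFactorial 2 * (N - 2).choose (n - 2) := by
  rw [descFactorial_eq_factorial_mul_choose, descFactorial_eq_factorial_mul_choose,
    mul_left_comm, Nat.choose_mul hn, mul_assoc]

/-- Under simple random sampling without replacement, the sample variance
(with divisor `n-1`) is an unbiased estimator of the population variance
(with divisor `N-1`): its average over all subsets of `Fin N` of cardinality
`n` equals the population variance. -/
theorem sample_variance_unbiased_srswor
    (N n : ℕ) (hn : 2 ≤ n) (hN : n ≤ N) (y : Fin N → ℝ)
    (Ybar : ℝ) (hYbar : Ybar = (∑ i, y i) / (N : ℝ))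
    (S2 : ℝ) (hS2 : S2 = (∑ i, (y i - Ybar) ^ 2) / ((N : ℝ) - 1))
    (ybar : Finset (Fin N) → ℝ)
    (hybar : ∀ s : Finset (Fin N), ybar s = (∑ i ∈ s, y i) / (n : ℝ))
    (sy2 : Finset (Fin N) → ℝ)
    (hsy2 : ∀ s : Finset (Fin N),
      sy2 s = (∑ i ∈ s, (y i - ybar s) ^ 2) / ((n : ℝ) - 1)) :
    (∑ s ∈ Finset.powersetCard n (Finset.univ : Finset (Fin N)), sy2 s) /
      ((N.choose n : ℕ) : ℝ) = S2 := by
  set T := ∑ i, ∑ j, (y i - y j) ^ 2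
  have hsample : ∀ s ∈ powersetCard n univ,
      sy2 s = (∑ i ∈ s, ∑ j ∈ s, (y i - y j) ^ 2) / (2 * n * (n - 1)) := by
    intro s hs
    rw [hsy2, hybar, ← (mem_powersetCard.mp hs).2, sum_sq_sub_average, div_div]
  have hpop : S2 = T / (2 * N * (N - 1)) := by
    have h := sum_sq_sub_average (univ : Finset (Fin N)) y
    rw [card_univ, Fintype.card_fin] at h
    rw [hS2, hYbar, h, div_div]
  have htotal : ∑ s ∈ powersetCard n univ, sy2 s =
      (N - 2).choose (n - 2) * T / (2 * n * (n - 1)) := by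
    rw [sum_congr rfl hsample, ← sum_div, sum_powersetCard_sum_sum _ hn _ (by simp),
      card_univ, Fintype.card_fin]
  have hn1 : (1 : ℝ) < n := by exact_mod_cast hn
  have hN1 : (1 : ℝ) < N := by exact_mod_cast hn.trans hN
  have hchoose : (N.choose n : ℝ) ≠ 0 := Nat.cast_ne_zero.mpr (Nat.choose_pos hN).ne'
  rw [htotal, hpop]
  field_simp [sub_ne_zero.mpr hn1.ne', sub_ne_zero.mpr hN1.ne']
  have hchoose_id := congrArg (Nat.cast : ℕ → ℝ) (Nat.choose_mul_descFactorial_two N n hn)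
  push_cast [Nat.cast_descFactorial_two] at hchoose_id
  linear_combination -T * hchoose_id
end

section
/- Let S_y > 0, S_x > 0 and let A₁, A₂, A₃, A₄, A₅ be real numbers with A₁ > 0 and A₁·A₂ − A₃² > 0. Define F(d₁, d₂) = S_y⁴ + d₁²·S_y⁴·A₁ + d₂²·S_x⁴·A₂ + 2·d₁·d₂·S_y²·S_x²·A₃ − 2·d₁·S_y⁴·A₄ − 2·d₂·S_y²·S_x²·A₅. Then F attains its global minimum at d₁* = (A₂·A₄ − A₃·A₅)/(A₁·A₂ − A₃²) and d₂* = (S_y²/S_x²)·(A₁·A₅ − A₃·A₄)/(A₁·A₂ − A₃²); that is, F(d₁, d₂) ≥ F(d₁*, d₂*) for all real d₁, d₂. -/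
/-!
Substituting `u = d₁ S_y²`, `v = d₂ S_x²` turns `F - S_y⁴` into the quadratic
`A₁ u² + 2 A₃ u v + A₂ v² - 2 S_y² A₄ u - 2 S_y² A₅ v`, whose quadratic part is positive definite
because `A₁ > 0` and `A₁ A₂ - A₃² > 0`. The stated constants are the solution of the linear system
`∇ = 0` (Cramer's rule), and expanding around a critical point leaves only the quadratic part.
-/

section BinaryQuadratic

variable {R : Type*} [CommRing R]

def binaryQuadratic (a b c p r u v : R) : R :=
  a * u ^ 2 + 2 * b * u * v + c * v ^ 2 - 2 * p * u - 2 * r * v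

theorem binaryQuadratic_sub (a b c p r u v u₀ v₀ : R) :
    binaryQuadratic a b c p r u v - binaryQuadratic a b c p r u₀ v₀ =
      binaryQuadratic a b c 0 0 (u - u₀) (v - v₀) + 2 * (u - u₀) * (a * u₀ + b * v₀ - p) +
        2 * (v - v₀) * (b * u₀ + c * v₀ - r) := by
  unfold binaryQuadratic
  ring

end BinaryQuadratic

section PositiveDefinite

variable {R : Type*} [CommRing R] [LinearOrder R] [IsStrictOrderedRing R]

theorem binaryQuadratic_homogeneous_nonneg {a b c : R} (ha : 0 < a) (hdet : 0 < a * c - b ^ 2)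
    (x y : R) : 0 ≤ binaryQuadratic a b c 0 0 x y := by
  have hsq : a * binaryQuadratic a b c 0 0 x y = (a * x + b * y) ^ 2 + (a * c - b ^ 2) * y ^ 2 := by
    unfold binaryQuadratic
    ring
  have : 0 ≤ a * binaryQuadratic a b c 0 0 x y := by
    rw [hsq]
    positivity
  exact nonneg_of_mul_nonneg_right this ha

theorem binaryQuadratic_le_of_critical {a b c p r u₀ v₀ : R} (ha : 0 < a)
    (hdet : 0 < a * c - b ^ 2) (hu₀ : a * u₀ + b * v₀ = p) (hv₀ : b * u₀ + c * v₀ = r) (u v : R) :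
    binaryQuadratic a b c p r u₀ v₀ ≤ binaryQuadratic a b c p r u v := by
  have hsub := binaryQuadratic_sub a b c p r u v u₀ v₀
  rw [hu₀, hv₀, sub_self, sub_self, mul_zero, mul_zero, add_zero, add_zero] at hsub
  exact sub_nonneg.mp (hsub ▸ binaryQuadratic_homogeneous_nonneg ha hdet _ _)

end PositiveDefinite

theorem binaryQuadratic_le_cramer {K : Type*} [Field K] [LinearOrder K] [IsStrictOrderedRing K]
    {a b c p r : K} (ha : 0 < a) (hdet : 0 < a * c - b ^ 2)
    (u v : K) :
    binaryQuadratic a b c p r ((c * p - b * r) / (a * c - b ^ 2)) ((a * r - b * p) / (a * c - b ^ 2))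
      ≤ binaryQuadratic a b c p r u v := by
  have hD : a * c - b ^ 2 ≠ 0 := hdet.ne'
  refine binaryQuadratic_le_of_critical ha hdet ?_ ?_ u v <;>
    rw [mul_div_assoc', mul_div_assoc', ← add_div, div_eq_iff hD] <;> ring

theorem gupta_shabbir_mse_min_general
    (Sy Sx : ℝ) (hSx : Sx > 0)
    (A1 A2 A3 A4 A5 : ℝ) (hA1 : A1 > 0) (hdet : A1 * A2 - A3 ^ 2 > 0)
    (F : ℝ → ℝ → ℝ)
    (hF : ∀ d1 d2 : ℝ, F d1 d2 =
      Sy ^ 4 + d1 ^ 2 * Sy ^ 4 * A1 + d2 ^ 2 * Sx ^ 4 * A2 +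
        2 * d1 * d2 * Sy ^ 2 * Sx ^ 2 * A3 - 2 * d1 * Sy ^ 4 * A4 -
        2 * d2 * Sy ^ 2 * Sx ^ 2 * A5)
    (d1s d2s : ℝ)
    (hd1s : d1s = (A2 * A4 - A3 * A5) / (A1 * A2 - A3 ^ 2))
    (hd2s : d2s = (Sy ^ 2 / Sx ^ 2) * ((A1 * A5 - A3 * A4) / (A1 * A2 - A3 ^ 2))) :
    ∀ d1 d2 : ℝ, F d1 d2 ≥ F d1s d2s := by
  intro d1 d2
  have hF_eq : ∀ d1 d2, F d1 d2 =
      Sy ^ 4 + binaryQuadratic A1 A3 A2 (Sy ^ 2 * A4) (Sy ^ 2 * A5) (d1 * Sy ^ 2) (d2 * Sx ^ 2) := by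
    intro d1 d2
    rw [hF, binaryQuadratic]
    ring
  have hu : d1s * Sy ^ 2 = (A2 * (Sy ^ 2 * A4) - A3 * (Sy ^ 2 * A5)) / (A1 * A2 - A3 ^ 2) := by
    rw [hd1s]
    ring
  have hv : d2s * Sx ^ 2 = (A1 * (Sy ^ 2 * A5) - A3 * (Sy ^ 2 * A4)) / (A1 * A2 - A3 ^ 2) := by
    rw [hd2s]
    field_simp
  rw [ge_iff_le, hF_eq, hF_eq, hu, hv, add_le_add_iff_left]
  exact binaryQuadratic_le_cramer hA1 hdet _ _

/-- The quadratic MSE function of Gupta and Shabbir's hybrid class of variance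
estimators attains its global minimum at the stated optimum constants. -/
theorem gupta_shabbir_mse_min
    (Sy Sx : ℝ) (hSy : Sy > 0) (hSx : Sx > 0)
    (A1 A2 A3 A4 A5 : ℝ) (hA1 : A1 > 0) (hdet : A1 * A2 - A3 ^ 2 > 0)
    (F : ℝ → ℝ → ℝ)
    (hF : ∀ d1 d2 : ℝ, F d1 d2 =
      Sy ^ 4 + d1 ^ 2 * Sy ^ 4 * A1 + d2 ^ 2 * Sx ^ 4 * A2 +
        2 * d1 * d2 * Sy ^ 2 * Sx ^ 2 * A3 - 2 * d1 * Sy ^ 4 * A4 -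
        2 * d2 * Sy ^ 2 * Sx ^ 2 * A5)
    (d1s d2s : ℝ)
    (hd1s : d1s = (A2 * A4 - A3 * A5) / (A1 * A2 - A3 ^ 2))
    (hd2s : d2s = (Sy ^ 2 / Sx ^ 2) * ((A1 * A5 - A3 * A4) / (A1 * A2 - A3 ^ 2))) :
    ∀ d1 d2 : ℝ, F d1 d2 ≥ F d1s d2s :=
  gupta_shabbir_mse_min_general Sy Sx hSx A1 A2 A3 A4 A5 hA1 hdet F hF d1s d2s hd1s hd2s
end
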